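/- arXiv:2506.04812 — 7 statements merged into one kernel-verified Lean document; each statement's English description precedes it below -/
import Mathlib

section
/- Let M > 0 and Q ∈ ℝ with |Q| ≤ M, and set r₊ = M + √(M² − Q²) and Ω²(r) = 1 − 2M/r + Q²/r². Let v₀ ∈ ℝ and let r : [v₀, ∞) → ℝ be differentiable with r(v) > r₊ for all v ≥ v₀ and r′(v) = Ω²(r(v)). Let E be a real inner product space, Ξ : [v₀, ∞) → E continuous, and ξ : [v₀, ∞) → E differentiable with ξ′(v) = Ω²(r(v))·Ξ(v) for all v ≥ v₀. Assume ξ(v) converges to some ξ∞ ∈ E as v → ∞ and that v ↦ Ω²(r(v))·r(v)²·‖Ξ(v)‖² is integrable on [v₀, ∞). Then ‖ξ∞‖² ≤ (1 − r₊/r(v₀))⁻¹·‖ξ(v₀)‖² + (1/r₊)·∫_{v₀}^∞ Ω²(r(v))·r(v)²·‖Ξ(v)‖² dv. -/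
open MeasureTheory Filter Set
open scoped RealInnerProductSpace

/-- Transport Lemma, first estimate: for `ξ' = Ω² Ξ` along the radial flow `r' = Ω²(r)`
on the Reissner–Nordström exterior, the limit of `‖ξ‖²` at infinity is controlled by the
initial value and the weighted flux of `Ξ`. -/
theorem transport_lemma_first_estimate
    (M Q : ℝ) (hM : 0 < M) (hQ : |Q| ≤ M)
    (rp : ℝ) (hrp : rp = M + Real.sqrt (M ^ 2 - Q ^ 2))
    (Om2 : ℝ → ℝ) (hOm2 : ∀ s : ℝ, Om2 s = 1 - 2 * M / s + Q ^ 2 / s ^ 2)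
    (v₀ : ℝ) (r : ℝ → ℝ)
    (hr_pos : ∀ v ∈ Set.Ici v₀, rp < r v)
    (hr_deriv : ∀ v ∈ Set.Ici v₀, HasDerivAt r (Om2 (r v)) v)
    {E : Type*} [NormedAddCommGroup E] [InnerProductSpace ℝ E]
    (Ξ ξ : ℝ → E)
    (hΞ_cont : ContinuousOn Ξ (Set.Ici v₀))
    (hξ_deriv : ∀ v ∈ Set.Ici v₀, HasDerivAt ξ (Om2 (r v) • Ξ v) v)
    (ξlim : E) (hξ_lim : Tendsto ξ atTop (nhds ξlim))
    (hint : IntegrableOn (fun v => Om2 (r v) * (r v) ^ 2 * ‖Ξ v‖ ^ 2) (Set.Ici v₀)) :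
    ‖ξlim‖ ^ 2 ≤ (1 - rp / r v₀)⁻¹ * ‖ξ v₀‖ ^ 2
      + (1 / rp) * ∫ v in Set.Ici v₀, Om2 (r v) * (r v) ^ 2 * ‖Ξ v‖ ^ 2 := by
  -- basic facts about rp
  have hMQ : (0:ℝ) ≤ M ^ 2 - Q ^ 2 := by
    have := abs_nonneg Q
    nlinarith [sq_abs Q]
  have hd0 : 0 ≤ Real.sqrt (M ^ 2 - Q ^ 2) := Real.sqrt_nonneg _
  have hd2 : (Real.sqrt (M ^ 2 - Q ^ 2)) ^ 2 = M ^ 2 - Q ^ 2 := Real.sq_sqrt hMQ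
  have hrp0 : 0 < rp := by rw [hrp]; linarith
  -- positivity of r and Om2 ∘ r on the exterior
  have hr0 : ∀ v ∈ Set.Ici v₀, 0 < r v := fun v hv => lt_trans hrp0 (hr_pos v hv)
  have hOmpos : ∀ v ∈ Set.Ici v₀, 0 < Om2 (r v) := by
    intro v hv
    have hs : rp < r v := hr_pos v hv
    have hs0 : 0 < r v := hr0 v hv
    have hsd : M + Real.sqrt (M ^ 2 - Q ^ 2) < r v := by rw [← hrp]; exact hs
    have : Om2 (r v) = ((r v) ^ 2 - 2 * M * r v + Q ^ 2) / (r v) ^ 2 := by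
      rw [hOm2]; field_simp
    rw [this]
    apply div_pos _ (by positivity)
    nlinarith [hd2, hd0, hsd]
  -- continuity facts
  have hr_cont : ContinuousOn r (Set.Ici v₀) := fun v hv =>
    (hr_deriv v hv).continuousAt.continuousWithinAt
  have hξ_cont : ContinuousOn ξ (Set.Ici v₀) := fun v hv =>
    (hξ_deriv v hv).continuousAt.continuousWithinAt
  have hOm_cont : ContinuousOn (fun v => Om2 (r v)) (Set.Ici v₀) := by
    have : (fun v => Om2 (r v)) =
        fun v => 1 - 2 * M / r v + Q ^ 2 / (r v) ^ 2 := funext fun v => hOm2 _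
    rw [this]
    exact (continuousOn_const.sub
      ((continuousOn_const.div hr_cont (fun v hv => (hr0 v hv).ne')))).add
      (continuousOn_const.div (hr_cont.pow 2) (fun v hv => pow_ne_zero 2 (hr0 v hv).ne'))
  have h_cont : ContinuousOn (fun v => Om2 (r v) * (r v) ^ 2 * ‖Ξ v‖ ^ 2) (Set.Ici v₀) :=
    (hOm_cont.mul (hr_cont.pow 2)).mul ((hΞ_cont.norm).pow 2)
  have h_nonneg : ∀ v ∈ Set.Ici v₀, 0 ≤ Om2 (r v) * (r v) ^ 2 * ‖Ξ v‖ ^ 2 := fun v hv =>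
    mul_nonneg (mul_nonneg (hOmpos v hv).le (by positivity)) (by positivity)
  have hc_pos : ∀ v ∈ Set.Ici v₀, 0 < 1 - rp / r v := by
    intro v hv
    have := hr_pos v hv
    have h0 := hr0 v hv
    have : rp / r v < 1 := (div_lt_one h0).2 this
    linarith
  -- the auxiliary function
  set F : ℝ → ℝ := fun t => ‖ξ t‖ ^ 2 / (1 - rp / r t)
      - (1 / rp) * ∫ s in v₀..t, Om2 (r s) * (r s) ^ 2 * ‖Ξ s‖ ^ 2 with hF
  -- derivative of F at interior points is nonpositive
  have hFderiv : ∀ v ∈ Set.Ioi v₀, ∃ D, HasDerivAt F D v ∧ D ≤ 0 := by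
    intro v hv
    have hv' : v ∈ Set.Ici v₀ := Set.mem_Ici.2 (le_of_lt hv)
    have hR0 : 0 < r v := hr0 v hv'
    have hRrp : rp < r v := hr_pos v hv'
    have ho : 0 < Om2 (r v) := hOmpos v hv'
    have hcv : 0 < 1 - rp / r v := hc_pos v hv'
    -- derivative of the squared norm
    have hp : HasDerivAt (fun t => ‖ξ t‖ ^ 2)
        (2 * (Om2 (r v) * ⟪ξ v, Ξ v⟫)) v := by
      have h1 := HasDerivAt.inner ℝ (hξ_deriv v hv') (hξ_deriv v hv')
      have h2 : (fun t => ⟪ξ t, ξ t⟫) = fun t => ‖ξ t‖ ^ 2 :=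
        funext fun t => real_inner_self_eq_norm_sq _
      rw [h2] at h1
      refine h1.congr_deriv ?_
      simp only [real_inner_smul_right, real_inner_smul_left]
      rw [real_inner_comm]
      ring
    -- derivative of 1 - rp / r
    have hc : HasDerivAt (fun t => 1 - rp / r t) (rp * Om2 (r v) / (r v) ^ 2) v := by
      have h1 := ((hasDerivAt_const v rp).div (hr_deriv v hv') hR0.ne').const_sub 1
      refine h1.congr_deriv ?_
      field_simp
      ring
    -- derivative of the primitive
    have hii : IntervalIntegrable (fun s => Om2 (r s) * (r s) ^ 2 * ‖Ξ s‖ ^ 2) volume v₀ v := by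
      rw [intervalIntegrable_iff_integrableOn_Ioc_of_le (le_of_lt hv)]
      exact hint.mono_set (fun x hx => le_of_lt hx.1)
    have hmeas : StronglyMeasurableAtFilter
        (fun s => Om2 (r s) * (r s) ^ 2 * ‖Ξ s‖ ^ 2) (nhds v) :=
      ⟨Set.Ici v₀, Ici_mem_nhds hv, h_cont.aestronglyMeasurable measurableSet_Ici⟩
    have hcontat : ContinuousAt (fun s => Om2 (r s) * (r s) ^ 2 * ‖Ξ s‖ ^ 2) v :=
      (h_cont v hv').continuousAt (Ici_mem_nhds hv)
    have hH := intervalIntegral.integral_hasDerivAt_right hii hmeas hcontat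
    -- derivative of F
    have hg := hp.div hc (ne_of_gt hcv)
    have hFd := hg.sub (hH.const_mul (1 / rp))
    refine ⟨_, hFd, ?_⟩
    -- the key inequality
    have hIle : ⟪ξ v, Ξ v⟫ ≤ ‖ξ v‖ * ‖Ξ v‖ := real_inner_le_norm _ _
    have hu : 0 < r v - rp := by linarith
    have key : 2 * rp * r v * (r v - rp) * ⟪ξ v, Ξ v⟫ - rp ^ 2 * ‖ξ v‖ ^ 2
        - (r v) ^ 2 * ‖Ξ v‖ ^ 2 * (r v - rp) ^ 2 ≤ 0 := by
      nlinarith [sq_nonneg (r v * (r v - rp) * ‖Ξ v‖ - rp * ‖ξ v‖),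
        mul_nonneg (mul_nonneg (mul_nonneg hrp0.le hR0.le) hu.le)
          (sub_nonneg.2 hIle)]
    have heq : (2 * (Om2 (r v) * ⟪ξ v, Ξ v⟫) * (1 - rp / r v)
          - ‖ξ v‖ ^ 2 * (rp * Om2 (r v) / (r v) ^ 2)) / (1 - rp / r v) ^ 2
        - 1 / rp * (Om2 (r v) * (r v) ^ 2 * ‖Ξ v‖ ^ 2)
        = Om2 (r v) / (rp * (r v - rp) ^ 2)
          * (2 * rp * r v * (r v - rp) * ⟪ξ v, Ξ v⟫ - rp ^ 2 * ‖ξ v‖ ^ 2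
            - (r v) ^ 2 * ‖Ξ v‖ ^ 2 * (r v - rp) ^ 2) := by
      have h1 : 1 - rp / r v = (r v - rp) / r v := by field_simp
      rw [h1]
      field_simp
    rw [heq]
    exact mul_nonpos_of_nonneg_of_nonpos (by positivity) key
  -- F is antitone on [v₀, v], hence the pointwise bound
  have hbound : ∀ v ∈ Set.Ici v₀, ‖ξ v‖ ^ 2 ≤ (1 - rp / r v₀)⁻¹ * ‖ξ v₀‖ ^ 2
      + (1 / rp) * ∫ t in Set.Ici v₀, Om2 (r t) * (r t) ^ 2 * ‖Ξ t‖ ^ 2 := by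
    intro v hv
    have hcv := hc_pos v hv
    have hcv0 := hc_pos v₀ (le_refl v₀)
    -- step 1: ‖ξ v‖² ≤ g v
    have step1 : ‖ξ v‖ ^ 2 ≤ ‖ξ v‖ ^ 2 / (1 - rp / r v) := by
      rw [le_div_iff₀ hcv]
      have hle1 : 1 - rp / r v ≤ 1 := by
        have : 0 ≤ rp / r v := div_nonneg hrp0.le (hr0 v hv).le
        linarith
      exact mul_le_of_le_one_right (by positivity) hle1
    -- step 2: F v ≤ F v₀
    have step2 : F v ≤ F v₀ := by
      rcases eq_or_lt_of_le (Set.mem_Ici.1 hv) with h | h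
      · rw [← h]
      · have hIcc : Set.Icc v₀ v ⊆ Set.Ici v₀ := fun x hx => hx.1
        have hFcont : ContinuousOn F (Set.Icc v₀ v) := by
          apply ContinuousOn.sub
          · exact ((hξ_cont.norm.pow 2).div
              (continuousOn_const.sub (continuousOn_const.div hr_cont
                (fun x hx => (hr0 x hx).ne')))
              (fun x hx => (hc_pos x hx).ne')).mono hIcc
          · apply continuousOn_const.mul
            have : IntegrableOn (fun s => Om2 (r s) * (r s) ^ 2 * ‖Ξ s‖ ^ 2)
                (Set.uIcc v₀ v) := by
              rw [Set.uIcc_of_le hv]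
              exact hint.mono_set hIcc
            have := intervalIntegral.continuousOn_primitive_interval this
            rwa [Set.uIcc_of_le hv] at this
        have hFdiff : DifferentiableOn ℝ F (interior (Set.Icc v₀ v)) := by
          rw [interior_Icc]
          intro x hx
          obtain ⟨D, hD, -⟩ := hFderiv x hx.1
          exact hD.differentiableAt.differentiableWithinAt
        have hFd0 : ∀ x ∈ interior (Set.Icc v₀ v), deriv F x ≤ 0 := by
          rw [interior_Icc]
          intro x hx
          obtain ⟨D, hD, hDle⟩ := hFderiv x hx.1
          rw [hD.deriv]
          exact hDle
        exact antitoneOn_of_deriv_nonpos (convex_Icc v₀ v) hFcont hFdiff hFd0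
          (Set.left_mem_Icc.2 hv) (Set.right_mem_Icc.2 hv) hv
    -- step 3: interval integral ≤ integral over Ici
    have step3 : (∫ t in v₀..v, Om2 (r t) * (r t) ^ 2 * ‖Ξ t‖ ^ 2)
        ≤ ∫ t in Set.Ici v₀, Om2 (r t) * (r t) ^ 2 * ‖Ξ t‖ ^ 2 := by
      rw [intervalIntegral.integral_of_le hv]
      apply setIntegral_mono_set hint
      · exact (ae_restrict_iff' measurableSet_Ici).2 (Filter.Eventually.of_forall h_nonneg)
      · exact Filter.Eventually.of_forall (fun x hx => le_of_lt hx.1)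
    -- assemble
    have hFv₀ : F v₀ = ‖ξ v₀‖ ^ 2 / (1 - rp / r v₀) := by
      simp [hF, intervalIntegral.integral_same]
    have := step2
    rw [hFv₀] at this
    have h4 : ‖ξ v‖ ^ 2 / (1 - rp / r v) ≤ ‖ξ v₀‖ ^ 2 / (1 - rp / r v₀)
        + (1 / rp) * ∫ t in v₀..v, Om2 (r t) * (r t) ^ 2 * ‖Ξ t‖ ^ 2 := by
      have : F v = ‖ξ v‖ ^ 2 / (1 - rp / r v)
          - (1 / rp) * ∫ t in v₀..v, Om2 (r t) * (r t) ^ 2 * ‖Ξ t‖ ^ 2 := rfl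
      linarith [step2, hFv₀ ▸ step2]
    calc ‖ξ v‖ ^ 2 ≤ ‖ξ v‖ ^ 2 / (1 - rp / r v) := step1
      _ ≤ ‖ξ v₀‖ ^ 2 / (1 - rp / r v₀)
          + (1 / rp) * ∫ t in v₀..v, Om2 (r t) * (r t) ^ 2 * ‖Ξ t‖ ^ 2 := h4
      _ ≤ (1 - rp / r v₀)⁻¹ * ‖ξ v₀‖ ^ 2
          + (1 / rp) * ∫ t in Set.Ici v₀, Om2 (r t) * (r t) ^ 2 * ‖Ξ t‖ ^ 2 := by
        rw [div_eq_mul_inv, mul_comm]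
        exact add_le_add le_rfl (mul_le_mul_of_nonneg_left step3 (by positivity))
  -- pass to the limit
  have hnormlim : Tendsto (fun v => ‖ξ v‖ ^ 2) atTop (nhds (‖ξlim‖ ^ 2)) :=
    (hξ_lim.norm).pow 2
  exact le_of_tendsto hnormlim (Filter.eventually_atTop.2 ⟨v₀, hbound⟩)
end

section
/- Let M > 0 and Q ∈ ℝ with |Q| ≤ M, and set r₊ = M + √(M² − Q²) and Ω²(r) = 1 − 2M/r + Q²/r². Let v₀ ∈ ℝ and let r : [v₀, ∞) → ℝ be differentiable with r(v) > r₊ for all v ≥ v₀ and r′(v) = Ω²(r(v)). Let E be a real inner product space, Ξ : [v₀, ∞) → E continuous, and ξ : [v₀, ∞) → E differentiable with ξ′(v) = Ω²(r(v))·Ξ(v) for all v ≥ v₀. Assume v ↦ Ω²(r(v))·r(v)²·‖Ξ(v)‖² is integrable on [v₀, ∞). Then v ↦ (Ω²(r(v))/r(v)²)·‖ξ(v)‖² is integrable on [v₀, ∞) and ∫_{v₀}^∞ (Ω²(r(v))/r(v)²)·‖ξ(v)‖² dv ≤ (8/r₊)·‖ξ(v₀)‖² + (16/r₊²)·∫_{v₀}^∞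 Ω²(r(v))·r(v)²·‖Ξ(v)‖² dv. -/
open MeasureTheory Filter Set Topology

/-- Transport Lemma, second (integrated-decay) estimate with explicit constants. -/
theorem transport_lemma_second_estimate
    (M Q : ℝ) (hM : 0 < M) (hQ : |Q| ≤ M)
    (rp : ℝ) (hrp : rp = M + Real.sqrt (M ^ 2 - Q ^ 2))
    (Om2 : ℝ → ℝ) (hOm2 : ∀ s : ℝ, Om2 s = 1 - 2 * M / s + Q ^ 2 / s ^ 2)
    (v₀ : ℝ) (r : ℝ → ℝ)
    (hr_pos : ∀ v ∈ Set.Ici v₀, rp < r v)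
    (hr_deriv : ∀ v ∈ Set.Ici v₀, HasDerivAt r (Om2 (r v)) v)
    {E : Type*} [NormedAddCommGroup E] [InnerProductSpace ℝ E]
    (Ξ ξ : ℝ → E)
    (hΞ_cont : ContinuousOn Ξ (Set.Ici v₀))
    (hξ_deriv : ∀ v ∈ Set.Ici v₀, HasDerivAt ξ (Om2 (r v) • Ξ v) v)
    (hint : IntegrableOn (fun v => Om2 (r v) * (r v) ^ 2 * ‖Ξ v‖ ^ 2) (Set.Ici v₀)) :
    IntegrableOn (fun v => (Om2 (r v) / (r v) ^ 2) * ‖ξ v‖ ^ 2) (Set.Ici v₀)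
    ∧ ∫ v in Set.Ici v₀, (Om2 (r v) / (r v) ^ 2) * ‖ξ v‖ ^ 2
        ≤ (8 / rp) * ‖ξ v₀‖ ^ 2
          + (16 / rp ^ 2) * ∫ v in Set.Ici v₀, Om2 (r v) * (r v) ^ 2 * ‖Ξ v‖ ^ 2 := by
  have hMQ : 0 ≤ M ^ 2 - Q ^ 2 := by nlinarith [sq_abs Q, abs_nonneg Q]
  have hsq : Real.sqrt (M ^ 2 - Q ^ 2) ^ 2 = M ^ 2 - Q ^ 2 := Real.sq_sqrt hMQ
  have hsnn : 0 ≤ Real.sqrt (M ^ 2 - Q ^ 2) := Real.sqrt_nonneg _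
  have hrp_pos : 0 < rp := by rw [hrp]; linarith
  have hrpos : ∀ v ∈ Set.Ici v₀, 0 < r v := fun v hv => hrp_pos.trans (hr_pos v hv)
  have hrne : ∀ v ∈ Set.Ici v₀, r v ≠ 0 := fun v hv => (hrpos v hv).ne'
  have hOm2eq : ∀ v ∈ Set.Ici v₀,
      Om2 (r v) = ((r v) ^ 2 - 2 * M * r v + Q ^ 2) / (r v) ^ 2 := by
    intro v hv
    have h0 := hrne v hv
    rw [hOm2]
    field_simp
  have hOmpos : ∀ v ∈ Set.Ici v₀, 0 < Om2 (r v) := by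
    intro v hv
    have hs : M + Real.sqrt (M ^ 2 - Q ^ 2) < r v := hrp ▸ hr_pos v hv
    have hs0 : 0 < r v := hrpos v hv
    have key : 0 < (r v) ^ 2 - 2 * M * r v + Q ^ 2 := by nlinarith [hsq, hsnn]
    rw [hOm2eq v hv]
    positivity
  -- continuity
  have hrc : ContinuousOn r (Set.Ici v₀) := fun v hv =>
    (hr_deriv v hv).continuousAt.continuousWithinAt
  have hξc : ContinuousOn ξ (Set.Ici v₀) := fun v hv =>
    (hξ_deriv v hv).continuousAt.continuousWithinAt
  have hOmc : ContinuousOn (fun v => Om2 (r v)) (Set.Ici v₀) := by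
    have : ContinuousOn (fun v => 1 - 2 * M / r v + Q ^ 2 / (r v) ^ 2) (Set.Ici v₀) :=
      (continuousOn_const.sub (continuousOn_const.div hrc hrne)).add
        (continuousOn_const.div (hrc.pow 2) fun v hv => pow_ne_zero 2 (hrne v hv))
    exact this.congr fun v _ => hOm2 (r v)
  set F : ℝ → ℝ := fun v => (Om2 (r v) / (r v) ^ 2) * ‖ξ v‖ ^ 2 with hFdef
  set h : ℝ → ℝ := fun v => Om2 (r v) * (r v) ^ 2 * ‖Ξ v‖ ^ 2 with hhdef
  have hFc : ContinuousOn F (Set.Ici v₀) :=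
    (hOmc.div (hrc.pow 2) fun v hv => pow_ne_zero 2 (hrne v hv)).mul (hξc.norm.pow 2)
  -- the auxiliary function g and its derivative
  set g : ℝ → ℝ := fun v => ‖ξ v‖ ^ 2 / r v with hgdef
  set G : ℝ → ℝ := fun v =>
    (2 * (Om2 (r v) * (inner ℝ (Ξ v) (ξ v) : ℝ)) * r v - ‖ξ v‖ ^ 2 * Om2 (r v)) / (r v) ^ 2
    with hGdef
  have hgd : ∀ v ∈ Set.Ici v₀, HasDerivAt g (G v) v := by
    intro v hv
    have h1 : HasDerivAt (fun t => (inner ℝ (ξ t) (ξ t) : ℝ))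
        ((inner ℝ (ξ v) (Om2 (r v) • Ξ v) : ℝ) + (inner ℝ (Om2 (r v) • Ξ v) (ξ v) : ℝ)) v :=
      (hξ_deriv v hv).inner ℝ (hξ_deriv v hv)
    have h2 : (fun t => (inner ℝ (ξ t) (ξ t) : ℝ)) = fun t => ‖ξ t‖ ^ 2 :=
      funext fun t => real_inner_self_eq_norm_sq (ξ t)
    rw [h2] at h1
    have h3 : HasDerivAt (fun t => ‖ξ t‖ ^ 2)
        (2 * (Om2 (r v) * (inner ℝ (Ξ v) (ξ v) : ℝ))) v := by
      convert h1 using 1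
      rw [real_inner_smul_left, real_inner_smul_right, real_inner_comm]
      ring
    exact h3.div (hr_deriv v hv) (hrne v hv)
  -- pointwise key estimate
  have hkey : ∀ v ∈ Set.Ici v₀, F v ≤ (4 / rp ^ 2) * h v - 2 * G v := by
    intro v hv
    have hs : rp < r v := hr_pos v hv
    have hs0 : 0 < r v := hrpos v hv
    have hω : 0 < Om2 (r v) := hOmpos v hv
    have hip : (inner ℝ (Ξ v) (ξ v) : ℝ) ≤ ‖Ξ v‖ * ‖ξ v‖ := real_inner_le_norm _ _
    have key0 : 4 * (inner ℝ (Ξ v) (ξ v) : ℝ) * r v ≤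
        4 * (r v) ^ 4 * ‖Ξ v‖ ^ 2 / rp ^ 2 + ‖ξ v‖ ^ 2 := by
      have h1 : 4 * (inner ℝ (Ξ v) (ξ v) : ℝ) * r v ≤ 4 * (‖Ξ v‖ * ‖ξ v‖) * r v := by
        have := mul_le_mul_of_nonneg_right hip hs0.le
        nlinarith
      have h2 : 4 * (‖Ξ v‖ * ‖ξ v‖) * r v ≤ 4 * ‖Ξ v‖ ^ 2 * (r v) ^ 2 + ‖ξ v‖ ^ 2 := by
        nlinarith [sq_nonneg (2 * ‖Ξ v‖ * r v - ‖ξ v‖)]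
      have h3 : 4 * ‖Ξ v‖ ^ 2 * (r v) ^ 2 ≤ 4 * (r v) ^ 4 * ‖Ξ v‖ ^ 2 / rp ^ 2 := by
        rw [le_div_iff₀ (by positivity)]
        have hsr : rp ^ 2 ≤ (r v) ^ 2 := by nlinarith
        nlinarith [mul_nonneg (mul_nonneg (by positivity : (0:ℝ) ≤ 4 * ‖Ξ v‖ ^ 2)
          (sq_nonneg (r v))) (sub_nonneg.2 hsr)]
      linarith
    have expand : (4 / rp ^ 2) * h v - 2 * G v - F v =
        (Om2 (r v) / (r v) ^ 2) *
          (4 * (r v) ^ 4 * ‖Ξ v‖ ^ 2 / rp ^ 2 + ‖ξ v‖ ^ 2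
            - 4 * (inner ℝ (Ξ v) (ξ v) : ℝ) * r v) := by
      simp only [hFdef, hhdef, hGdef]
      field_simp
      ring
    have hnn : 0 ≤ (4 / rp ^ 2) * h v - 2 * G v - F v := by
      rw [expand]
      have : 0 ≤ 4 * (r v) ^ 4 * ‖Ξ v‖ ^ 2 / rp ^ 2 + ‖ξ v‖ ^ 2
          - 4 * (inner ℝ (Ξ v) (ξ v) : ℝ) * r v := by linarith
      positivity
    linarith
  have hhnn : ∀ v ∈ Set.Ici v₀, 0 ≤ h v := fun v hv => by
    have := hOmpos v hv; positivity
  have hFnn : ∀ v ∈ Set.Ici v₀, 0 ≤ F v := fun v hv => by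
    have := hOmpos v hv
    have := hrpos v hv
    positivity
  have hIh : 0 ≤ ∫ v in Set.Ici v₀, h v :=
    setIntegral_nonneg measurableSet_Ici hhnn
  set C : ℝ := (8 / rp) * ‖ξ v₀‖ ^ 2 + (16 / rp ^ 2) * ∫ v in Set.Ici v₀, h v with hCdef
  -- uniform bound on interval integrals
  have hbound : ∀ V, v₀ ≤ V → ∫ v in v₀..V, F v ≤ C := by
    intro V hV
    have hsub : Set.uIcc v₀ V ⊆ Set.Ici v₀ := by
      rw [Set.uIcc_of_le hV]; exact fun x hx => hx.1
    have hFci : IntervalIntegrable F volume v₀ V := (hFc.mono hsub).intervalIntegrable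
    have hhi : IntervalIntegrable h volume v₀ V := by
      rw [intervalIntegrable_iff_integrableOn_Ioc_of_le hV]
      exact hint.mono_set fun x hx => le_of_lt hx.1
    have hGc : ContinuousOn G (Set.Ici v₀) := by
      refine ContinuousOn.div ?_ (hrc.pow 2) fun v hv => pow_ne_zero 2 (hrne v hv)
      exact ((continuousOn_const.mul (hOmc.mul (hΞ_cont.inner hξc))).mul hrc).sub
        ((hξc.norm.pow 2).mul hOmc)
    have hGi : IntervalIntegrable G volume v₀ V := (hGc.mono hsub).intervalIntegrable
    have hFTC : ∫ v in v₀..V, G v = g V - g v₀ :=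
      intervalIntegral.integral_eq_sub_of_hasDerivAt (fun x hx => hgd x (hsub hx)) hGi
    have hmono : ∫ v in v₀..V, F v ≤ ∫ v in v₀..V, ((4 / rp ^ 2) * h v - 2 * G v) := by
      exact intervalIntegral.integral_mono_on hV hFci ((hhi.const_mul _).sub (hGi.const_mul 2))
        fun x hx => hkey x hx.1
    rw [intervalIntegral.integral_sub (hhi.const_mul _) (hGi.const_mul 2),
      intervalIntegral.integral_const_mul, intervalIntegral.integral_const_mul, hFTC] at hmono
    have hgV : 0 ≤ g V := div_nonneg (sq_nonneg _) (hrpos V hV).le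
    have hgv₀ : g v₀ ≤ ‖ξ v₀‖ ^ 2 / rp := by
      apply div_le_div_of_nonneg_left (sq_nonneg _) hrp_pos (hr_pos v₀ Set.self_mem_Ici).le
    have hIntHle : ∫ v in v₀..V, h v ≤ ∫ v in Set.Ici v₀, h v := by
      rw [intervalIntegral.integral_of_le hV]
      refine setIntegral_mono_set hint ?_ (HasSubset.Subset.eventuallyLE fun x hx => le_of_lt hx.1)
      exact (ae_restrict_iff' measurableSet_Ici).2 (Filter.Eventually.of_forall hhnn)
    have hm2 : (4 / rp ^ 2) * ∫ v in v₀..V, h v ≤ (4 / rp ^ 2) * ∫ v in Set.Ici v₀, h v :=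
      mul_le_mul_of_nonneg_left hIntHle (by positivity)
    have e1 : (8 / rp) * ‖ξ v₀‖ ^ 2 + (16 / rp ^ 2) * (∫ v in Set.Ici v₀, h v)
        - ((4 / rp ^ 2) * (∫ v in Set.Ici v₀, h v) + 2 * (‖ξ v₀‖ ^ 2 / rp))
        = 6 * (‖ξ v₀‖ ^ 2 / rp) + 12 * ((∫ v in Set.Ici v₀, h v) / rp ^ 2) := by ring
    have p1 : 0 ≤ ‖ξ v₀‖ ^ 2 / rp := by positivity
    have p2 : 0 ≤ (∫ v in Set.Ici v₀, h v) / rp ^ 2 := div_nonneg hIh (by positivity)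
    rw [hCdef]
    linarith
  -- integrability on Ioi
  have hFi_Ioi : IntegrableOn F (Set.Ioi v₀) := by
    refine integrableOn_Ioi_of_intervalIntegral_norm_bounded C v₀
      (f := F) (b := fun i : ℝ => max v₀ i) (l := atTop)
      (fun i => ?_) (tendsto_atTop_mono (fun i => le_max_right v₀ i) tendsto_id) ?_
    · have : ContinuousOn F (Set.Icc v₀ (max v₀ i)) :=
        hFc.mono fun x hx => hx.1
      exact (this.integrableOn_Icc).mono_set Set.Ioc_subset_Icc_self
    · refine Filter.Eventually.of_forall fun i => ?_
      have hle : v₀ ≤ max v₀ i := le_max_left _ _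
      have : ∫ x in v₀..max v₀ i, ‖F x‖ = ∫ x in v₀..max v₀ i, F x := by
        refine intervalIntegral.integral_congr fun x hx => ?_
        have hx' : x ∈ Set.Ici v₀ := by
          rw [Set.uIcc_of_le hle] at hx; exact hx.1
        exact Real.norm_of_nonneg (hFnn x hx')
      rw [this]
      exact hbound _ hle
  have hFi : IntegrableOn F (Set.Ici v₀) := (integrableOn_Ici_iff_integrableOn_Ioi (by simp)).2 hFi_Ioi
  refine ⟨hFi, ?_⟩
  have hT : Tendsto (fun V => ∫ v in v₀..V, F v) atTop (𝓝 (∫ v in Set.Ioi v₀, F v)) :=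
    intervalIntegral_tendsto_integral_Ioi v₀ hFi_Ioi tendsto_id
  have hle : ∫ v in Set.Ioi v₀, F v ≤ C :=
    le_of_tendsto hT ((eventually_ge_atTop v₀).mono fun V hV => hbound V hV)
  rw [show (∫ v in Set.Ici v₀, F v) = ∫ v in Set.Ioi v₀, F v from
    integral_Ici_eq_integral_Ioi]
  exact hle
end

section
/- Let M > 0 and Q ∈ ℝ with |Q| ≤ M, set r₊ = M + √(M² − Q²) and Ω²(r) = 1 − 2M/r + Q²/r², and let δ ∈ (0, 1] and ε > 0. Let v₀ ∈ ℝ and let r : [v₀, ∞) → ℝ be differentiable with r(v) > r₊ for all v ≥ v₀ and r′(v) = Ω²(r(v)). Let E be a real inner product space, Ξ : [v₀, ∞) → E continuous, and ξ : [v₀, ∞) → E differentiable with ξ′(v) = Ω²(r(v))·Ξ(v). Define F(r) = (1 − δ·r₊/r)⁻¹ and write Ω(v) = √(Ω²(r(v))). Then for every V ≥ v₀: F(r(V))·‖ξ(V)‖² + ∫_{v₀}^V [ ‖(√ε·Ω(v)·r(v)/√r₊)·Ξ(v) − (√r₊·F(r(v))·Ω(v)/(r(v)·√ε))·ξ(v)‖²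 + (δε − 1)·‖(√r₊·F(r(v))·Ω(v)/(r(v)·√ε))·ξ(v)‖² ] dv = F(r(v₀))·‖ξ(v₀)‖² + (ε/r₊)·∫_{v₀}^V Ω²(r(v))·r(v)²·‖Ξ(v)‖² dv. -/
open MeasureTheory Filter Set

open scoped RealInnerProductSpace

private lemma transport_aux_expand {E : Type*} [NormedAddCommGroup E] [InnerProductSpace ℝ E]
    (a b c : ℝ) (x y : E) :
    ‖a • x - b • y‖ ^ 2 + c * ‖b • y‖ ^ 2
      = a ^ 2 * ‖x‖ ^ 2 - 2 * (a * b) * ⟪x, y⟫ + b ^ 2 * ‖y‖ ^ 2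
        + c * (b ^ 2 * ‖y‖ ^ 2) := by
  simp only [norm_sub_sq_real, norm_smul, real_inner_smul_left, real_inner_smul_right,
    Real.norm_eq_abs, mul_pow, sq_abs]
  ring

/-- The exact integral identity with parameters `(δ, ε)` from the proof of the Transport Lemma. -/
theorem transport_lemma_integral_identity
    (M Q : ℝ) (hM : 0 < M) (hQ : |Q| ≤ M)
    (rp : ℝ) (hrp : rp = M + Real.sqrt (M ^ 2 - Q ^ 2))
    (Om2 : ℝ → ℝ) (hOm2 : ∀ s : ℝ, Om2 s = 1 - 2 * M / s + Q ^ 2 / s ^ 2)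
    (δ ε : ℝ) (hδ : δ ∈ Set.Ioc (0 : ℝ) 1) (hε : 0 < ε)
    (v₀ : ℝ) (r : ℝ → ℝ)
    (hr_pos : ∀ v ∈ Set.Ici v₀, rp < r v)
    (hr_deriv : ∀ v ∈ Set.Ici v₀, HasDerivAt r (Om2 (r v)) v)
    {E : Type*} [NormedAddCommGroup E] [InnerProductSpace ℝ E]
    (Ξ ξ : ℝ → E)
    (hΞ_cont : ContinuousOn Ξ (Set.Ici v₀))
    (hξ_deriv : ∀ v ∈ Set.Ici v₀, HasDerivAt ξ (Om2 (r v) • Ξ v) v)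
    (F : ℝ → ℝ) (hF : ∀ s : ℝ, F s = (1 - δ * rp / s)⁻¹)
    (Om : ℝ → ℝ) (hOm : ∀ v : ℝ, Om v = Real.sqrt (Om2 (r v))) :
    ∀ V : ℝ, v₀ ≤ V →
      F (r V) * ‖ξ V‖ ^ 2
        + ∫ v in v₀..V,
            (‖(Real.sqrt ε * Om v * r v / Real.sqrt rp) • Ξ v
                - (Real.sqrt rp * F (r v) * Om v / (r v * Real.sqrt ε)) • ξ v‖ ^ 2
              + (δ * ε - 1)
                * ‖(Real.sqrt rp * F (r v) * Om v / (r v * Real.sqrt ε)) • ξ v‖ ^ 2)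
      = F (r v₀) * ‖ξ v₀‖ ^ 2
        + (ε / rp) * ∫ v in v₀..V, Om2 (r v) * (r v) ^ 2 * ‖Ξ v‖ ^ 2 := by
  intro V hV
  obtain ⟨hδ0, hδ1⟩ := hδ
  have hMQ : (0:ℝ) ≤ M ^ 2 - Q ^ 2 := by
    nlinarith [sq_abs Q, mul_self_le_mul_self (abs_nonneg Q) hQ]
  have hsq : Real.sqrt (M ^ 2 - Q ^ 2) ^ 2 = M ^ 2 - Q ^ 2 := Real.sq_sqrt hMQ
  have hsnn : 0 ≤ Real.sqrt (M ^ 2 - Q ^ 2) := Real.sqrt_nonneg _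
  have hsleM : Real.sqrt (M ^ 2 - Q ^ 2) ≤ M := by nlinarith [sq_nonneg Q]
  have hrp_pos : 0 < rp := by rw [hrp]; linarith
  set rm : ℝ := M - Real.sqrt (M ^ 2 - Q ^ 2) with hrm
  have hrm_nn : 0 ≤ rm := by rw [hrm]; linarith
  have hrm_le : rm ≤ rp := by rw [hrm, hrp]; linarith
  have hOm2_eq : ∀ s : ℝ, s ≠ 0 → Om2 s = (s - rp) * (s - rm) / s ^ 2 := by
    intro s hs
    rw [hOm2, hrm, hrp]
    field_simp
    linear_combination hsq
  have hrv : ∀ v ∈ Set.Ici v₀, 0 < r v := fun v hv => hrp_pos.trans (hr_pos v hv)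
  have hrne : ∀ v ∈ Set.Ici v₀, r v ≠ 0 := fun v hv => (hrv v hv).ne'
  have hOm2_pos : ∀ v ∈ Set.Ici v₀, 0 < Om2 (r v) := by
    intro v hv
    rw [hOm2_eq _ (hrne v hv)]
    have h1 : 0 < r v - rp := by linarith [hr_pos v hv]
    have h2 : 0 < r v - rm := by linarith [hr_pos v hv, hrm_le]
    exact div_pos (mul_pos h1 h2) (pow_pos (hrv v hv) 2)
  have hden_pos : ∀ v ∈ Set.Ici v₀, 0 < 1 - δ * rp / r v := by
    intro v hv
    have h1 : δ * rp / r v < 1 := by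
      rw [div_lt_one (hrv v hv)]
      nlinarith [hr_pos v hv]
    linarith
  have hF_pos : ∀ v ∈ Set.Ici v₀, 0 < F (r v) := fun v hv => by
    rw [hF]; exact inv_pos.mpr (hden_pos v hv)
  -- continuity
  have hr_cont : ContinuousOn r (Set.Ici v₀) :=
    fun v hv => ((hr_deriv v hv).continuousAt).continuousWithinAt
  have hξ_cont : ContinuousOn ξ (Set.Ici v₀) :=
    fun v hv => ((hξ_deriv v hv).continuousAt).continuousWithinAt
  have hOm2_cont : ContinuousOn (fun v => Om2 (r v)) (Set.Ici v₀) := by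
    have he : (fun v => Om2 (r v)) = fun v => 1 - 2 * M / r v + Q ^ 2 / (r v) ^ 2 :=
      funext fun v => hOm2 _
    rw [he]
    exact (continuousOn_const.sub (continuousOn_const.div hr_cont hrne)).add
      (continuousOn_const.div (hr_cont.pow 2) (fun v hv => pow_ne_zero 2 (hrne v hv)))
  have hOm_cont : ContinuousOn Om (Set.Ici v₀) := by
    have he : Om = fun v => Real.sqrt (Om2 (r v)) := funext hOm
    rw [he]; exact hOm2_cont.sqrt
  have hF_cont : ContinuousOn (fun v => F (r v)) (Set.Ici v₀) := by
    have he : (fun v => F (r v)) = fun v => (1 - δ * rp / r v)⁻¹ := funext fun v => hF _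
    rw [he]
    exact (continuousOn_const.sub (continuousOn_const.div hr_cont hrne)).inv₀
      (fun v hv => (hden_pos v hv).ne')
  have hεsne : Real.sqrt ε ≠ 0 := Real.sqrt_ne_zero'.mpr hε
  set I : ℝ → ℝ := fun v =>
      (‖(Real.sqrt ε * Om v * r v / Real.sqrt rp) • Ξ v
          - (Real.sqrt rp * F (r v) * Om v / (r v * Real.sqrt ε)) • ξ v‖ ^ 2
        + (δ * ε - 1)
          * ‖(Real.sqrt rp * F (r v) * Om v / (r v * Real.sqrt ε)) • ξ v‖ ^ 2) with hI_def
  set J : ℝ → ℝ := fun v => Om2 (r v) * (r v) ^ 2 * ‖Ξ v‖ ^ 2 with hJ_def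
  have hIcc : Set.Icc v₀ V ⊆ Set.Ici v₀ := Set.Icc_subset_Ici_self
  have hb_cont : ContinuousOn
      (fun v => (Real.sqrt rp * F (r v) * Om v / (r v * Real.sqrt ε)) • ξ v) (Set.Ici v₀) :=
    (((continuousOn_const.mul hF_cont).mul hOm_cont).div
        (hr_cont.mul continuousOn_const)
        (fun v hv => mul_ne_zero (hrne v hv) hεsne)).smul hξ_cont
  have hI_cont : ContinuousOn I (Set.Ici v₀) := by
    apply ContinuousOn.add
    · exact (((((continuousOn_const.mul hOm_cont).mul hr_cont).div_const _).smul
        hΞ_cont).sub hb_cont).norm.pow 2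
    · exact continuousOn_const.mul (hb_cont.norm.pow 2)
  have hJ_cont : ContinuousOn J (Set.Ici v₀) :=
    (hOm2_cont.mul (hr_cont.pow 2)).mul (hΞ_cont.norm.pow 2)
  have hI_int : IntervalIntegrable I volume v₀ V := by
    apply ContinuousOn.intervalIntegrable
    rw [Set.uIcc_of_le hV]; exact hI_cont.mono hIcc
  have hJ_int : IntervalIntegrable J volume v₀ V := by
    apply ContinuousOn.intervalIntegrable
    rw [Set.uIcc_of_le hV]; exact hJ_cont.mono hIcc
  -- the key derivative
  have key : ∀ t ∈ Set.uIcc v₀ V, HasDerivAt (fun v => F (r v) * ‖ξ v‖ ^ 2)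
      (ε / rp * J t - I t) t := by
    intro t ht
    rw [Set.uIcc_of_le hV] at ht
    have htI : t ∈ Set.Ici v₀ := hIcc ht
    have hrt := hrv t htI
    have hrtne := hrne t htI
    have hO2 := hOm2_pos t htI
    have hd := hden_pos t htI
    have hu : HasDerivAt (fun v => 1 - δ * rp / r v) (δ * rp * Om2 (r t) / (r t) ^ 2) t := by
      have h1 := (hasDerivAt_const t (δ * rp)).div (hr_deriv t htI) hrtne
      have h2 := (hasDerivAt_const t (1:ℝ)).sub h1
      refine h2.congr_deriv ?_
      field_simp
      ring
    have hFr : HasDerivAt (fun v => F (r v))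
        (-(δ * rp * Om2 (r t) / (r t) ^ 2) * (F (r t)) ^ 2) t := by
      have he : (fun v => F (r v)) = fun v => (1 - δ * rp / r v)⁻¹ := funext fun v => hF _
      rw [he, hF]
      have h2 := hu.inv hd.ne'
      refine h2.congr_deriv ?_
      field_simp
    have hn : HasDerivAt (fun v => ‖ξ v‖ ^ 2) (2 * Om2 (r t) * ⟪Ξ t, ξ t⟫) t := by
      have he : (fun v => ‖ξ v‖ ^ 2) = fun v => ⟪ξ v, ξ v⟫ :=
        funext fun v => (real_inner_self_eq_norm_sq _).symm
      rw [he]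
      have h2 := (hξ_deriv t htI).inner ℝ (hξ_deriv t htI)
      refine h2.congr_deriv ?_
      rw [real_inner_smul_left, real_inner_smul_right, real_inner_comm]
      ring
    have hprod := hFr.mul hn
    refine hprod.congr_deriv ?_
    -- algebraic identity
    have hOmsq : Om t ^ 2 = Om2 (r t) := by rw [hOm]; exact Real.sq_sqrt hO2.le
    have hε2 : Real.sqrt ε ^ 2 = ε := Real.sq_sqrt hε.le
    have hrp2 : Real.sqrt rp ^ 2 = rp := Real.sq_sqrt hrp_pos.le
    set a : ℝ := Real.sqrt ε * Om t * r t / Real.sqrt rp with ha_def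
    set b : ℝ := Real.sqrt rp * F (r t) * Om t / (r t * Real.sqrt ε) with hb_def
    have hrpsne : Real.sqrt rp ≠ 0 := Real.sqrt_ne_zero'.mpr hrp_pos
    have ha2 : a ^ 2 = ε * Om2 (r t) * (r t) ^ 2 / rp := by
      rw [ha_def, div_pow, mul_pow, mul_pow, hε2, hrp2, hOmsq]
    have hb2 : b ^ 2 = rp * (F (r t)) ^ 2 * Om2 (r t) / ((r t) ^ 2 * ε) := by
      rw [hb_def, div_pow, mul_pow, mul_pow, mul_pow, hε2, hrp2, hOmsq]
    have hab : a * b = F (r t) * Om2 (r t) := by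
      rw [ha_def, hb_def]
      field_simp
      linear_combination F (r t) * hOmsq
    have hIexp : I t = a ^ 2 * ‖Ξ t‖ ^ 2 - 2 * (a * b) * ⟪Ξ t, ξ t⟫ + b ^ 2 * ‖ξ t‖ ^ 2
        + (δ * ε - 1) * (b ^ 2 * ‖ξ t‖ ^ 2) :=
      transport_aux_expand a b (δ * ε - 1) (Ξ t) (ξ t)
    rw [hIexp]
    simp only [hJ_def]
    rw [ha2, hb2, hab]
    field_simp
    ring
  have hg_int : IntervalIntegrable (fun t => ε / rp * J t - I t) volume v₀ V :=
    (hJ_int.const_mul _).sub hI_int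
  have hFTC := intervalIntegral.integral_eq_sub_of_hasDerivAt key hg_int
  rw [intervalIntegral.integral_sub (hJ_int.const_mul _) hI_int,
    intervalIntegral.integral_const_mul] at hFTC
  linarith [hFTC]
end

section
/- Let M > 0 and Q ∈ ℝ, and set r_c = 4Q²/(3M). Let I ⊆ ℝ be an interval and let r, λ, X : I → ℝ be differentiable with r(v) ≠ 0 for all v, and let P : I → ℝ. Suppose X′(v) = −6M·(1 − r_c/r(v))·λ′(v) − 8Q·r′(v)·P(v) for all v ∈ I. Then for all v ∈ I: −(1/2)·X(v)·λ′(v) = d/dv [ −(1 − r_c/r(v))·(3M/2)·λ(v)² − (1/2)·X(v)·λ(v) ] + 2·r′(v)·( r(v)·P(v) − Q·λ(v)/r(v) )² − 2·r′(v)·r(v)²·P(v)². -/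
/-- Rewriting of the mixed flux term `(1/2) X λ'` as a total derivative plus
gauge-invariant squares, used in the proof of the coercivity theorem. -/
theorem mixed_flux_term_identity
    (M Q : ℝ) (hM : 0 < M)
    (rc : ℝ) (hrc : rc = 4 * Q ^ 2 / (3 * M))
    (I : Set ℝ) (hI : Convex ℝ I)
    (r lam X r' lam' X' P : ℝ → ℝ)
    (hr0 : ∀ v ∈ I, r v ≠ 0)
    (hr : ∀ v ∈ I, HasDerivAt r (r' v) v)
    (hlam : ∀ v ∈ I, HasDerivAt lam (lam' v) v)
    (hX : ∀ v ∈ I, HasDerivAt X (X' v) v)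
    (hXeq : ∀ v ∈ I, X' v = -6 * M * (1 - rc / r v) * lam' v - 8 * Q * r' v * P v) :
    ∀ v ∈ I,
      HasDerivAt
        (fun v => -(1 - rc / r v) * (3 * M / 2) * lam v ^ 2 - (1 / 2) * X v * lam v)
        (-(1 / 2) * X v * lam' v
          - 2 * r' v * (r v * P v - Q * lam v / r v) ^ 2
          + 2 * r' v * (r v) ^ 2 * P v ^ 2) v := by
  intro v hv
  have hrv := hr v hv
  have hlamv := hlam v hv
  have hXv := hX v hv
  have hrne := hr0 v hv
  have hdiv : HasDerivAt (fun v => rc / r v)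
      ((0 * r v - rc * r' v) / r v ^ 2) v :=
    (hasDerivAt_const v rc).div hrv hrne
  have h1 : HasDerivAt (fun v => -(1 - rc / r v) * (3 * M / 2) * lam v ^ 2)
      ((-(0 - (0 * r v - rc * r' v) / r v ^ 2) * (3 * M / 2)) * lam v ^ 2
        + (-(1 - rc / r v) * (3 * M / 2)) * (2 * lam v ^ 1 * lam' v)) v := by
    exact ((((hasDerivAt_const v (1:ℝ)).sub hdiv).neg.mul_const (3 * M / 2)).mul
      (hlamv.pow 2))
  have h2 : HasDerivAt (fun v => (1 / 2 : ℝ) * X v * lam v)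
      ((1 / 2 * X' v) * lam v + (1 / 2 * X v) * lam' v) v :=
    (hXv.const_mul (1 / 2 : ℝ)).mul hlamv
  have h := h1.sub h2
  convert h using 1
  case e'_4 => rfl
  case e'_5 => rfl
  case e'_8 => rfl
  rw [hXeq v hv, hrc]
  have hM' : (3 : ℝ) * M ≠ 0 := by positivity
  field_simp
  ring
end

section
/- Let M > 0 and Q ∈ ℝ with |Q| ≤ M, set r₊ = M + √(M² − Q²), Ω²(r) = 1 − 2M/r + Q²/r², and r_c = 4Q²/(3M). Let v₀ ∈ ℝ and let r : [v₀, ∞) → ℝ be differentiable with r(v) > r₊ for all v ≥ v₀ and r′(v) = Ω²(r(v)). Let λ, X : [v₀, ∞) → ℝ be differentiable and P : [v₀, ∞) → ℝ continuous with X′(v) = −6M·(1 − r_c/r(v))·λ′(v) − 8Q·Ω²(r(v))·P(v) for all v. Assume λ(v) → λ∞ and X(v) → X∞ as v → ∞, and that v ↦ Ω²(r(v))·r(v)²·( Q·λ(v)/r(v)² − P(v) )² is integrable on [v₀, ∞). Then (X∞ + 6M·λ∞)²/(24M) ≤ ( X(v₀) + (1 − r_c/r(v₀))·6M·λ(v₀)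 )² / ( 24M·(1 − r₊/r(v₀)) ) + (32Q²/(24M·r₊))·∫_{v₀}^∞ 2·Ω²(r(v))·r(v)²·( Q·λ(v)/r(v)² − P(v) )² dv. -/
open MeasureTheory Filter Set

private lemma rn_key_amgm (M Q rp O rv Dv Yv Sv : ℝ) (hM : 0 < M) (hrp : 0 < rp)
    (hO : 0 < O) (hrv : 0 < rv) (hDv : 0 < Dv) :
    (2 * Yv * (8 * Q * O * Sv) * (24 * M * Dv) - Yv ^ 2 * (24 * M * (rp * O / rv ^ 2)))
      / (24 * M * Dv) ^ 2
      ≤ 64 * Q ^ 2 / (24 * M * rp) * (O * rv ^ 2 * Sv ^ 2) := by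
  have h1 : 0 ≤ Yv^2*rp^2 + 64*Q^2*Sv^2*Dv^2*rv^4 - 16*Q*Yv*Sv*Dv*(rp*rv^2) := by
    nlinarith [sq_nonneg (Yv*rp - 8*Q*Sv*Dv*rv^2)]
  rw [← sub_nonneg]
  have heq : 64 * Q ^ 2 / (24 * M * rp) * (O * rv ^ 2 * Sv ^ 2) -
      (2 * Yv * (8 * Q * O * Sv) * (24 * M * Dv) - Yv ^ 2 * (24 * M * (rp * O / rv ^ 2)))
        / (24 * M * Dv) ^ 2
      = (O/(24*M*Dv^2*rp*rv^2)) *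
        (Yv^2*rp^2 + 64*Q^2*Sv^2*Dv^2*rv^4 - 16*Q*Yv*Sv*Dv*(rp*rv^2)) := by
    field_simp
    ring
  rw [heq]
  positivity

set_option maxHeartbeats 1000000 in
/-- Key estimate of Step 2 in the proof of the coercivity theorem: the final-sphere
boundary quantity `(X + 6Mλ)²/(24M)` at `v = ∞` is controlled by its initial value and
a multiple `32Q²/(24M r₊)` of the nonnegative flux. -/
theorem final_sphere_boundary_estimate
    (M Q : ℝ) (hM : 0 < M) (hQ : |Q| ≤ M)
    (rp : ℝ) (hrp : rp = M + Real.sqrt (M ^ 2 - Q ^ 2))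
    (Om2 : ℝ → ℝ) (hOm2 : ∀ s : ℝ, Om2 s = 1 - 2 * M / s + Q ^ 2 / s ^ 2)
    (rc : ℝ) (hrc : rc = 4 * Q ^ 2 / (3 * M))
    (v₀ : ℝ) (r : ℝ → ℝ)
    (hr_pos : ∀ v ∈ Set.Ici v₀, rp < r v)
    (hr_deriv : ∀ v ∈ Set.Ici v₀, HasDerivAt r (Om2 (r v)) v)
    (lam X lam' X' P : ℝ → ℝ)
    (hlam : ∀ v ∈ Set.Ici v₀, HasDerivAt lam (lam' v) v)
    (hX : ∀ v ∈ Set.Ici v₀, HasDerivAt X (X' v) v)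
    (hP : ContinuousOn P (Set.Ici v₀))
    (hXeq : ∀ v ∈ Set.Ici v₀,
      X' v = -6 * M * (1 - rc / r v) * lam' v - 8 * Q * Om2 (r v) * P v)
    (lamL XL : ℝ)
    (hlamL : Tendsto lam atTop (nhds lamL))
    (hXL : Tendsto X atTop (nhds XL))
    (hint : IntegrableOn
      (fun v => Om2 (r v) * (r v) ^ 2 * (Q * lam v / (r v) ^ 2 - P v) ^ 2) (Set.Ici v₀)) :
    (XL + 6 * M * lamL) ^ 2 / (24 * M)
      ≤ (X v₀ + (1 - rc / r v₀) * 6 * M * lam v₀) ^ 2 / (24 * M * (1 - rp / r v₀))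
        + (32 * Q ^ 2 / (24 * M * rp))
            * ∫ v in Set.Ici v₀,
                2 * Om2 (r v) * (r v) ^ 2 * (Q * lam v / (r v) ^ 2 - P v) ^ 2 := by
  -- basic positivity facts
  have hQ2 : Q ^ 2 ≤ M ^ 2 := by
    have := sq_abs Q
    nlinarith [abs_nonneg Q]
  have hs0 : Real.sqrt (M ^ 2 - Q ^ 2) ^ 2 = M ^ 2 - Q ^ 2 :=
    Real.sq_sqrt (by linarith)
  have hs0nn : 0 ≤ Real.sqrt (M ^ 2 - Q ^ 2) := Real.sqrt_nonneg _
  have hrpM : M ≤ rp := by rw [hrp]; linarith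
  have hrp0 : 0 < rp := lt_of_lt_of_le hM hrpM
  have hMrp : Q ^ 2 ≤ M * rp := by nlinarith
  have hr0 : ∀ v ∈ Set.Ici v₀, 0 < r v := fun v hv => lt_trans hrp0 (hr_pos v hv)
  have hOmpos : ∀ s, rp < s → 0 < Om2 s := by
    intro s hs
    have hs' : 0 < s := lt_trans hrp0 hs
    have hsM : M + Real.sqrt (M ^ 2 - Q ^ 2) < s := hrp ▸ hs
    rw [hOm2 s]
    have h1 : 1 - 2 * M / s + Q ^ 2 / s ^ 2 = (s ^ 2 - 2 * M * s + Q ^ 2) / s ^ 2 := by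
      field_simp
    rw [h1]
    apply div_pos _ (by positivity)
    nlinarith
  have hOmmono : ∀ s t, rp < t → t ≤ s → Om2 t ≤ Om2 s := by
    intro s t ht hts
    have ht0 : 0 < t := lt_trans hrp0 ht
    have hs0' : 0 < s := lt_of_lt_of_le ht0 hts
    rw [hOm2, hOm2, ← sub_nonneg]
    have h1 : (1 - 2 * M / s + Q ^ 2 / s ^ 2) - (1 - 2 * M / t + Q ^ 2 / t ^ 2)
        = (s - t) * (t * (M * s - Q ^ 2) + s * (M * t - Q ^ 2)) / (s ^ 2 * t ^ 2) := by
      field_simp; ring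
    rw [h1]
    apply div_nonneg _ (by positivity)
    have h2 : Q ^ 2 ≤ M * t := le_trans hMrp (by nlinarith)
    have h3 : Q ^ 2 ≤ M * s := le_trans h2 (by nlinarith)
    have h4 : 0 ≤ t * (M * s - Q ^ 2) + s * (M * t - Q ^ 2) := by nlinarith
    exact mul_nonneg (sub_nonneg.2 hts) h4
  -- r is monotone and tends to infinity
  have hrmono : MonotoneOn r (Set.Ici v₀) := by
    apply monotoneOn_of_deriv_nonneg (convex_Ici v₀)
    · exact fun v hv => (hr_deriv v hv).continuousAt.continuousWithinAt
    · intro v hv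
      rw [interior_Ici] at hv
      exact (hr_deriv v (Ioi_subset_Ici_self hv)).differentiableAt.differentiableWithinAt
    · intro v hv
      rw [interior_Ici] at hv
      rw [(hr_deriv v (Ioi_subset_Ici_self hv)).deriv]
      exact (hOmpos _ (hr_pos v (Ioi_subset_Ici_self hv))).le
  have hv₀mem : v₀ ∈ Set.Ici v₀ := self_mem_Ici
  have hc : 0 < Om2 (r v₀) := hOmpos _ (hr_pos v₀ hv₀mem)
  have hrtop : Tendsto r atTop atTop := by
    set c := Om2 (r v₀) with hcdef
    have hrge : ∀ v ∈ Set.Ici v₀, c ≤ Om2 (r v) := by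
      intro v hv
      exact hOmmono _ _ (hr_pos v₀ hv₀mem) (hrmono hv₀mem hv hv)
    have hgmono : MonotoneOn (fun v => r v - c * v) (Set.Ici v₀) := by
      apply monotoneOn_of_deriv_nonneg (convex_Ici v₀)
      · exact ContinuousOn.sub
          (fun v hv => (hr_deriv v hv).continuousAt.continuousWithinAt)
          (continuousOn_const.mul continuousOn_id)
      · intro v hv
        rw [interior_Ici] at hv
        exact (((hr_deriv v (Ioi_subset_Ici_self hv)).sub
          ((hasDerivAt_id v).const_mul c)).differentiableAt).differentiableWithinAt
      · intro v hv
        rw [interior_Ici] at hv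
        have hd : HasDerivAt (fun v => r v - c * v) (Om2 (r v) - c * 1) v :=
          (hr_deriv v (Ioi_subset_Ici_self hv)).sub ((hasDerivAt_id v).const_mul c)
        rw [hd.deriv]
        have := hrge v (Ioi_subset_Ici_self hv)
        linarith
    apply tendsto_atTop_mono' atTop
      (show (fun v => c * v + (r v₀ - c * v₀)) ≤ᶠ[atTop] r from ?_)
      (tendsto_atTop_add_const_right atTop _ (tendsto_id.const_mul_atTop hc))
    filter_upwards [eventually_ge_atTop v₀] with v hv
    have := hgmono hv₀mem hv hv
    simp only at this
    linarith
  -- abbreviations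
  set S : ℝ → ℝ := fun v => Q * lam v / (r v) ^ 2 - P v with hSdef
  set Y : ℝ → ℝ := fun v => X v + 6 * M * (1 - rc / r v) * lam v with hYdef
  set D : ℝ → ℝ := fun v => 1 - rp / r v with hDdef
  set G : ℝ → ℝ := fun v => Y v ^ 2 / (24 * M * D v) with hGdef
  set f : ℝ → ℝ := fun v => Om2 (r v) * (r v) ^ 2 * S v ^ 2 with hfdef
  set K : ℝ := 64 * Q ^ 2 / (24 * M * rp) with hKdef
  have hD_pos : ∀ v ∈ Set.Ici v₀, 0 < D v := by
    intro v hv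
    have := hr_pos v hv
    have h0 := hr0 v hv
    simp only [hDdef, sub_pos]
    rw [div_lt_one h0]
    exact this
  have hrne : ∀ v ∈ Set.Ici v₀, r v ≠ 0 := fun v hv => (hr0 v hv).ne'
  -- derivative of Y
  have hY' : ∀ v ∈ Set.Ici v₀, HasDerivAt Y (8 * Q * Om2 (r v) * S v) v := by
    intro v hv
    have h1 : HasDerivAt (fun w => 1 - rc / r w) (rc * Om2 (r v) / (r v) ^ 2) v := by
      have h2 : HasDerivAt (fun w => 1 - rc / r w) _ v := ((hasDerivAt_const v rc).div (hr_deriv v hv) (hrne v hv)).const_sub 1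
      convert h2 using 1
      ring
    have h3 := ((h1.mul (hlam v hv)).const_mul (6 * M)).const_add (0 : ℝ)
    have h4 := (hX v hv).add ((h1.mul (hlam v hv)).const_mul (6 * M))
    have h5 : HasDerivAt Y
        (X' v + 6 * M * (rc * Om2 (r v) / (r v) ^ 2 * lam v + (1 - rc / r v) * lam' v)) v := by
      have hfun : (fun w => X w + 6 * M * ((1 - rc / r w) * lam w)) = Y := by
        funext w; simp only [hYdef]; ring
      rw [← hfun]
      exact h4
    have h6 : X' v + 6 * M * (rc * Om2 (r v) / (r v) ^ 2 * lam v + (1 - rc / r v) * lam' v)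
        = 8 * Q * Om2 (r v) * S v := by
      rw [hXeq v hv, hrc]
      have := hrne v hv
      simp only [hSdef]
      field_simp
      ring
    rw [← h6]
    exact h5
  -- derivative of D
  have hD' : ∀ v ∈ Set.Ici v₀, HasDerivAt D (rp * Om2 (r v) / (r v) ^ 2) v := by
    intro v hv
    have h2 : HasDerivAt D _ v := ((hasDerivAt_const v rp).div (hr_deriv v hv) (hrne v hv)).const_sub 1
    convert h2 using 1
    ring
  -- derivative of G
  have hG' : ∀ v ∈ Set.Ici v₀, HasDerivAt G
      ((2 * Y v * (8 * Q * Om2 (r v) * S v) * (24 * M * D v)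
        - Y v ^ 2 * (24 * M * (rp * Om2 (r v) / (r v) ^ 2))) / (24 * M * D v) ^ 2) v := by
    intro v hv
    have hnum : HasDerivAt (fun w => Y w ^ 2) (2 * Y v * (8 * Q * Om2 (r v) * S v)) v := by
      have : HasDerivAt (fun w => Y w ^ 2) _ v := (hY' v hv).pow 2
      convert this using 1
      ring
    have hden : HasDerivAt (fun w => 24 * M * D w)
        (24 * M * (rp * Om2 (r v) / (r v) ^ 2)) v := (hD' v hv).const_mul (24 * M)
    have hdne : 24 * M * D v ≠ 0 := by
      have := hD_pos v hv; positivity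
    exact (hnum.div hden hdne)
  -- pointwise derivative bound
  have hbound : ∀ v ∈ Set.Ici v₀,
      (2 * Y v * (8 * Q * Om2 (r v) * S v) * (24 * M * D v)
        - Y v ^ 2 * (24 * M * (rp * Om2 (r v) / (r v) ^ 2))) / (24 * M * D v) ^ 2
      ≤ K * f v := by
    intro v hv
    have := rn_key_amgm M Q rp (Om2 (r v)) (r v) (D v) (Y v) (S v) hM hrp0
      (hOmpos _ (hr_pos v hv)) (hr0 v hv) (hD_pos v hv)
    simpa [hKdef, hfdef, mul_assoc] using this
  -- continuity of f on Ici v₀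
  have hrcont : ContinuousOn r (Set.Ici v₀) :=
    fun v hv => (hr_deriv v hv).continuousAt.continuousWithinAt
  have hlamcont : ContinuousOn lam (Set.Ici v₀) :=
    fun v hv => (hlam v hv).continuousAt.continuousWithinAt
  have hfcont : ContinuousOn f (Set.Ici v₀) := by
    have hfeq : ∀ v ∈ Set.Ici v₀, f v =
        (1 - 2 * M / r v + Q ^ 2 / (r v) ^ 2) * (r v) ^ 2
          * (Q * lam v / (r v) ^ 2 - P v) ^ 2 := by
      intro v hv
      simp only [hfdef, hSdef, hOm2]
    rw [continuousOn_congr hfeq]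
    have hr2ne : ∀ v ∈ Set.Ici v₀, (r v) ^ 2 ≠ 0 := fun v hv => pow_ne_zero 2 (hrne v hv)
    exact (((continuousOn_const.sub (continuousOn_const.div hrcont hrne)).add
        (continuousOn_const.div (hrcont.pow 2) hr2ne)).mul (hrcont.pow 2)).mul
      ((((continuousOn_const.mul hlamcont).div (hrcont.pow 2) hr2ne).sub hP).pow 2)
  have hfnonneg : ∀ v ∈ Set.Ici v₀, 0 ≤ f v := by
    intro v hv
    have := hOmpos _ (hr_pos v hv)
    simp only [hfdef]
    positivity
  have hKnn : 0 ≤ K := by rw [hKdef]; positivity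
  -- the main inequality at each finite V
  have hmain : ∀ V, v₀ < V → G V ≤ G v₀ + K * ∫ v in Set.Ici v₀, f v := by
    intro V hV
    have hVle : v₀ ≤ V := hV.le
    set I : ℝ → ℝ := fun x => ∫ t in v₀..x, f t with hIdef
    have hIcc : Set.Icc v₀ V ⊆ Set.Ici v₀ := Icc_subset_Ici_self
    have hintIcc : IntegrableOn f (Set.Icc v₀ V) := hint.mono_set hIcc
    have hIcont : ContinuousOn I (Set.Icc v₀ V) := by
      have := intervalIntegral.continuousOn_primitive_interval
        (μ := volume) (f := f) (a := v₀) (b := V)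
        (by rwa [Set.uIcc_of_le hVle])
      rwa [Set.uIcc_of_le hVle] at this
    have hI' : ∀ v ∈ Set.Ioo v₀ V, HasDerivAt I (f v) v := by
      intro v hv
      have hmem : Set.Ici v₀ ∈ nhds v := Ici_mem_nhds hv.1
      have hca : ContinuousAt f v := hfcont.continuousAt hmem
      apply intervalIntegral.integral_hasDerivAt_right
      · apply IntegrableOn.intervalIntegrable
        rw [Set.uIcc_of_le hv.1.le]
        exact hint.mono_set (Icc_subset_Ici_self)
      · exact ⟨Set.Ici v₀, hmem, hint.1⟩
      · exact hca
    have hanti : AntitoneOn (fun w => G w - K * I w) (Set.Icc v₀ V) := by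
      apply antitoneOn_of_deriv_nonpos (convex_Icc v₀ V)
      · exact ContinuousOn.sub
          (fun v hv => (hG' v (hIcc hv)).continuousAt.continuousWithinAt)
          (continuousOn_const.mul hIcont)
      · intro v hv
        rw [interior_Icc] at hv
        exact (((hG' v (hIcc (Ioo_subset_Icc_self hv))).sub
          ((hI' v hv).const_mul K)).differentiableAt).differentiableWithinAt
      · intro v hv
        rw [interior_Icc] at hv
        have hd := (hG' v (hIcc (Ioo_subset_Icc_self hv))).sub ((hI' v hv).const_mul K)
        rw [show (fun w => G w - K * I w) = (G - fun y => K * I y) from rfl, hd.deriv]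
        have := hbound v (hIcc (Ioo_subset_Icc_self hv))
        linarith
    have h1 : G V - K * I V ≤ G v₀ - K * I v₀ :=
      hanti (Set.left_mem_Icc.2 hVle) (Set.right_mem_Icc.2 hVle) hVle
    have hI0 : I v₀ = 0 := intervalIntegral.integral_same
    have hIle : I V ≤ ∫ v in Set.Ici v₀, f v := by
      rw [hIdef]
      simp only
      rw [intervalIntegral.integral_of_le hVle]
      apply setIntegral_mono_set hint
      · rw [EventuallyLE, ae_restrict_iff' measurableSet_Ici]
        exact ae_of_all _ fun v hv => hfnonneg v hv
      · exact HasSubset.Subset.eventuallyLE (Set.Ioc_subset_Icc_self.trans Set.Icc_subset_Ici_self)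
    have := mul_le_mul_of_nonneg_left hIle hKnn
    rw [hI0] at h1
    linarith
  -- limit of G
  have hGlim : Tendsto G atTop (nhds ((XL + 6 * M * lamL) ^ 2 / (24 * M))) := by
    have hrc0 : Tendsto (fun v => rc / r v) atTop (nhds 0) :=
      tendsto_const_nhds.div_atTop hrtop
    have hrp0' : Tendsto (fun v => rp / r v) atTop (nhds 0) :=
      tendsto_const_nhds.div_atTop hrtop
    have hYlim : Tendsto Y atTop (nhds (XL + 6 * M * (1 - 0) * lamL)) := by
      have h1 : Tendsto (fun v => 6 * M * (1 - rc / r v) * lam v) atTop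
          (nhds (6 * M * (1 - 0) * lamL)) :=
        (((tendsto_const_nhds.sub hrc0).const_mul (6 * M)).mul hlamL)
      exact hXL.add h1
    have hDlim : Tendsto (fun v => 24 * M * D v) atTop (nhds (24 * M * (1 - 0))) :=
      (tendsto_const_nhds.sub hrp0').const_mul (24 * M)
    have hne : (24 : ℝ) * M * (1 - 0) ≠ 0 := by norm_num; exact hM.ne'
    have := (hYlim.pow 2).div hDlim hne
    convert this using 2 <;> norm_num
    exact funext fun v => rfl
  -- conclude
  have hfin : (XL + 6 * M * lamL) ^ 2 / (24 * M)
      ≤ G v₀ + K * ∫ v in Set.Ici v₀, f v := by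
    apply le_of_tendsto hGlim
    filter_upwards [eventually_gt_atTop v₀] with V hV
    exact hmain V hV
  have heq1 : G v₀ = (X v₀ + (1 - rc / r v₀) * 6 * M * lam v₀) ^ 2
      / (24 * M * (1 - rp / r v₀)) := by
    simp only [hGdef, hYdef, hDdef]
    congr 1
    ring
  have heq2 : (32 * Q ^ 2 / (24 * M * rp))
      * ∫ v in Set.Ici v₀, 2 * Om2 (r v) * (r v) ^ 2 * (Q * lam v / (r v) ^ 2 - P v) ^ 2
      = K * ∫ v in Set.Ici v₀, f v := by
    have h1 : (fun v => 2 * Om2 (r v) * (r v) ^ 2 * (Q * lam v / (r v) ^ 2 - P v) ^ 2)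
        = fun v => 2 * f v := by
      funext v; simp only [hfdef, hSdef]; ring
    rw [h1, MeasureTheory.integral_const_mul, hKdef]
    ring
  rw [← heq1, heq2]
  exact hfin
end

section
/- Let a > 0 and r₀ > 0, and let F : (r₀, ∞) → ℝ be differentiable with F(r) > 0 for all r > r₀, satisfying 2·r²·F′(r) + F(r)² ≤ 0 for all r > r₀ and F(r) → a as r → ∞. Then r₀ ≥ a/2 and F(r) ≥ 2·a·r/(2r − a) for all r > r₀. Moreover, the function F₀(r) = 2·a·r/(2r − a) on (a/2, ∞) satisfies 2·r²·F₀′(r) + F₀(r)² = 0 and F₀(r) → a as r → ∞. -/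
open Filter

/-- Optimality of the weight: among positive differentiable `F` with `F → a` at infinity
satisfying `2r²F' + F² ≤ 0`, one has `r₀ ≥ a/2` and `F(r) ≥ 2ar/(2r - a)`, the extremal
weight `F₀(r) = 2ar/(2r - a)` solving `2r²F₀' + F₀² = 0` with `F₀ → a`. -/
theorem weight_optimality
    (a r₀ : ℝ) (ha : 0 < a) (hr₀ : 0 < r₀)
    (F F' : ℝ → ℝ)
    (hF_deriv : ∀ s : ℝ, r₀ < s → HasDerivAt F (F' s) s)
    (hF_pos : ∀ s : ℝ, r₀ < s → 0 < F s)
    (hF_ineq : ∀ s : ℝ, r₀ < s → 2 * s ^ 2 * F' s + F s ^ 2 ≤ 0)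
    (hF_lim : Tendsto F atTop (nhds a)) :
    a / 2 ≤ r₀
    ∧ (∀ s : ℝ, r₀ < s → 2 * a * s / (2 * s - a) ≤ F s)
    ∧ (∀ s : ℝ, a / 2 < s →
        HasDerivAt (fun t => 2 * a * t / (2 * t - a))
          (-(2 * a * s / (2 * s - a)) ^ 2 / (2 * s ^ 2)) s)
    ∧ Tendsto (fun t => 2 * a * t / (2 * t - a)) atTop (nhds a) := by
  -- auxiliary function u = -(F)⁻¹ - (2t)⁻¹
  set u : ℝ → ℝ := fun t => -(F t)⁻¹ - (2*t)⁻¹ with hu_def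
  have hu_deriv : ∀ s : ℝ, r₀ < s →
      HasDerivAt u ((2 * s ^ 2 * F' s + F s ^ 2) / (2 * s ^ 2 * F s ^ 2)) s := by
    intro s hs
    have hs0 : 0 < s := hr₀.trans hs
    have hFne : F s ≠ 0 := ne_of_gt (hF_pos s hs)
    have h1 : HasDerivAt (fun t => (F t)⁻¹) (-F' s / F s ^ 2) s := (hF_deriv s hs).inv hFne
    have h2 : HasDerivAt (fun t : ℝ => (2*t)⁻¹) (-(2*1) / (2*s) ^ 2) s :=
      ((hasDerivAt_id s).const_mul 2).inv (by positivity)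
    have h3 := h1.neg.sub h2
    refine h3.congr_deriv ?_
    field_simp
    ring
  have hu_anti : AntitoneOn u (Set.Ioi r₀) := by
    refine antitoneOn_of_deriv_nonpos (convex_Ioi r₀) ?_ ?_ ?_
    · intro x hx
      exact ((hu_deriv x hx).differentiableAt).continuousAt.continuousWithinAt
    · intro x hx
      rw [interior_Ioi] at hx
      exact ((hu_deriv x hx).differentiableAt).differentiableWithinAt
    · intro x hx
      rw [interior_Ioi] at hx
      rw [(hu_deriv x hx).deriv]
      have hx0 : 0 < x := hr₀.trans hx
      exact div_nonpos_iff.mpr (Or.inr ⟨hF_ineq x hx, by positivity⟩)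
  have hu_lim : Tendsto u atTop (nhds (-a⁻¹)) := by
    have h1 : Tendsto (fun t : ℝ => (F t)⁻¹) atTop (nhds a⁻¹) := hF_lim.inv₀ ha.ne'
    have h2 : Tendsto (fun t : ℝ => (2*t)⁻¹) atTop (nhds 0) := by
      apply Tendsto.inv_tendsto_atTop
      exact tendsto_id.const_mul_atTop two_pos
    have h3 := h1.neg.sub h2
    rw [sub_zero] at h3
    exact h3
  have hbound : ∀ s : ℝ, r₀ < s → -a⁻¹ ≤ u s := by
    intro s hs
    apply le_of_tendsto hu_lim
    filter_upwards [eventually_ge_atTop s] with t ht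
    exact hu_anti (Set.mem_Ioi.mpr hs) (Set.mem_Ioi.mpr (hs.trans_le ht)) ht
  -- key inequality at each s
  have hkey : ∀ s : ℝ, r₀ < s → a < 2 * s ∧ 2 * a * s / (2 * s - a) ≤ F s := by
    intro s hs
    have hs0 : 0 < s := hr₀.trans hs
    have hf : 0 < F s := hF_pos s hs
    have hb := hbound s hs
    have hinv : (F s)⁻¹ ≤ a⁻¹ - (2*s)⁻¹ := by
      simp only [hu_def] at hb; linarith
    have hpos : 0 < a⁻¹ - (2*s)⁻¹ := lt_of_lt_of_le (inv_pos.mpr hf) hinv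
    have h2sa : a < 2 * s := by
      have := sub_pos.mp hpos
      rwa [inv_lt_inv₀ (by positivity) ha] at this
    refine ⟨h2sa, ?_⟩
    have hc : 0 < 2 * a * s / (2 * s - a) := by
      have : 0 < 2 * s - a := by linarith
      positivity
    have hinv' : (F s)⁻¹ ≤ (2 * a * s / (2 * s - a))⁻¹ := by
      rw [inv_div]
      calc (F s)⁻¹ ≤ a⁻¹ - (2*s)⁻¹ := hinv
        _ = (2 * s - a) / (2 * a * s) := by
              field_simp
    exact (inv_le_inv₀ hf hc).mp hinv'
  refine ⟨?_, fun s hs => (hkey s hs).2, ?_, ?_⟩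
  · by_contra h
    push_neg at h
    have hmid : r₀ < (r₀ + a/2) / 2 := by linarith
    have := (hkey _ hmid).1
    linarith
  · intro s hs
    have hne : 2 * s - a ≠ 0 := by
      have : 0 < 2 * s - a := by linarith
      exact ne_of_gt this
    have hs0 : 0 < s := lt_of_le_of_lt (by positivity) hs
    have h1 : HasDerivAt (fun t : ℝ => 2 * a * t) (2 * a * 1) s := (hasDerivAt_id s).const_mul (2*a)
    have h2 : HasDerivAt (fun t : ℝ => 2 * t - a) (2 * 1) s :=
      ((hasDerivAt_id s).const_mul 2).sub_const a
    have h3 := h1.div h2 hne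
    refine h3.congr_deriv ?_
    field_simp
    ring
  · have heq : (fun t : ℝ => a + a^2 * (2*t - a)⁻¹) =ᶠ[atTop] (fun t => 2 * a * t / (2 * t - a)) := by
      filter_upwards [eventually_gt_atTop a] with t ht
      have hne : 2 * t - a ≠ 0 := by nlinarith
      field_simp
      ring
    apply Tendsto.congr' heq
    have h1 : Tendsto (fun t : ℝ => 2*t - a) atTop atTop := by
      apply tendsto_atTop_add_const_right
      exact tendsto_id.const_mul_atTop two_pos
    have h2 : Tendsto (fun t : ℝ => a^2 * (2*t - a)⁻¹) atTop (nhds 0) := by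
      simpa using (h1.inv_tendsto_atTop.const_mul (a^2))
    simpa using (tendsto_const_nhds.add h2)
end

section
/- Let M > 0, Q ∈ ℝ with Q ≠ 0, and a ∈ ℝ. Then the quadratic form (λ, X) ↦ (3M/2)·( 3Ma/(8Q²) − 1 )·λ² + (1/2)·( 3Ma/(8Q²) − 1 )·X·λ + ( a/(64Q²) )·X² is nonnegative for all real λ and X if and only if a ≥ 8Q²/(3M). -/
/-!
Sylvester's criterion for binary forms: `A x² + B x y + C y²` is positive semi-definite iff
`A ≥ 0`, `C ≥ 0` and `B² ≤ 4 A C`. Writing `u = 3Ma/(8Q²) - 1`, the boundary form has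
`A = (3M/2) u`, `B = u/2`, `C = a/(64Q²) = (u + 1)/(24M)`, so its determinant `4AC - B² = u/4`
is nonnegative exactly when `u ≥ 0`, i.e. when `a ≥ 8Q²/(3M)`.
-/

theorem binary_quadratic_form_nonneg_iff {K : Type*} [Field K] [LinearOrder K] [IsStrictOrderedRing K]
    (A B C : K) :
    (∀ x y : K, 0 ≤ A * x ^ 2 + B * x * y + C * y ^ 2) ↔ 0 ≤ A ∧ 0 ≤ C ∧ B ^ 2 ≤ 4 * A * C := by
  constructor
  · intro h
    have hA : 0 ≤ A := by simpa using h 1 0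
    have hC : 0 ≤ C := by simpa using h 0 1
    have hdisc : discrim A B C ≤ 0 := discrim_le_zero fun x => by simpa [sq] using h x 1
    exact ⟨hA, hC, by rw [discrim] at hdisc; linarith⟩
  · rintro ⟨hA, hC, hdet⟩ x y
    rcases hA.lt_or_eq with hA | rfl
    · have hsq : 4 * A * (A * x ^ 2 + B * x * y + C * y ^ 2)
          = (2 * A * x + B * y) ^ 2 + (4 * A * C - B ^ 2) * y ^ 2 := by ring
      have h4A : 0 ≤ 4 * A * (A * x ^ 2 + B * x * y + C * y ^ 2) := by
        rw [hsq]
        exact add_nonneg (sq_nonneg _) (mul_nonneg (sub_nonneg.2 hdet) (sq_nonneg y))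
      exact nonneg_of_mul_nonneg_right h4A (by positivity)
    · obtain rfl : B = 0 := by nlinarith [sq_nonneg B]
      simpa using mul_nonneg hC (sq_nonneg y)

theorem critical_threshold_iff {M Q a : ℝ} (hM : 0 < M) (hQ : Q ≠ 0) :
    0 ≤ 3 * M * a / (8 * Q ^ 2) - 1 ↔ 8 * Q ^ 2 / (3 * M) ≤ a := by
  have hQ2 : 0 < Q ^ 2 := by positivity
  rw [sub_nonneg, le_div_iff₀ (by positivity), div_le_iff₀ (by positivity), one_mul, mul_comm a]

/-- Sylvester-type criterion for the boundary quadratic form at the final sphere: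
it is positive semi-definite exactly when `a ≥ 8Q²/(3M)`. -/
theorem boundary_quadratic_form_nonneg_iff
    (M Q a : ℝ) (hM : 0 < M) (hQ : Q ≠ 0) :
    (∀ lam X : ℝ,
        0 ≤ (3 * M / 2) * (3 * M * a / (8 * Q ^ 2) - 1) * lam ^ 2
          + (1 / 2) * (3 * M * a / (8 * Q ^ 2) - 1) * X * lam
          + (a / (64 * Q ^ 2)) * X ^ 2)
      ↔ 8 * Q ^ 2 / (3 * M) ≤ a := by
  rw [← critical_threshold_iff hM hQ]
  set u := 3 * M * a / (8 * Q ^ 2) - 1 with hu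
  have hdet : 4 * (3 * M / 2 * u) * (a / (64 * Q ^ 2)) - (1 / 2 * u) ^ 2 = u / 4 := by
    rw [hu]; field_simp; ring
  simp only [mul_right_comm (1 / 2 * u) _ (_ : ℝ)] -- cross term as `B * lam * X`
  rw [binary_quadratic_form_nonneg_iff]
  constructor
  · rintro ⟨-, -, hB⟩
    linarith
  · intro hu_nonneg
    have ha : 0 < a := lt_of_lt_of_le (by positivity) ((critical_threshold_iff hM hQ).1 hu_nonneg)
    refine ⟨by positivity, by positivity, by linarith⟩
end
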